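/- arXiv:2305.12638 — 4 statements merged into one kernel-verified Lean document; each statement's English description precedes it below -/
import Mathlib

section
/- Let Y, Y' be real-valued square-integrable random variables, X a random vector, and Z a random variable. Define the complex estimator Ŷ_{X,Z} = E[Y' | X, Z] and the simple estimator Ŷ_X = E[Y' | X]. If Cov(Ŷ_{X,Z}, Y | X) ≤ 0 almost surely, then E[(Ŷ_X − Y)²] ≤ E[(Ŷ_{X,Z} − Y)²]. -/
/-!
Write `Ŷ = E[Y' | X, Z]` and `Ŷ_X = E[Ŷ | X] = E[Y' | X]`. Expanding the square and using that
`Ŷ - Ŷ_X` is orthogonal to every `X`-measurable square-integrable function gives the exact identity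
`E[(Ŷ - Y)²] = E[(Ŷ_X - Y)²] + E[(Ŷ - Ŷ_X)²] - 2 E[Cov(Ŷ, Y | X)]`,
so a nonpositive conditional covariance can only make `Ŷ` worse than `Ŷ_X`.
-/

open MeasureTheory

namespace MeasureTheory

variable {Ω : Type*} {m m0 : MeasurableSpace Ω} {μ : Measure[m0] Ω}

noncomputable def condCov (m : MeasurableSpace Ω) (f g : Ω → ℝ) (μ : Measure[m0] Ω) : Ω → ℝ :=
  μ[f * g | m] - μ[f | m] * μ[g | m]

lemma integral_mul_condExp_of_stronglyMeasurable (hm : m ≤ m0) [SigmaFinite (μ.trim hm)]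
    {f g : Ω → ℝ} (hg : StronglyMeasurable[m] g) (hgf : Integrable (g * f) μ)
    (hf : Integrable f μ) :
    ∫ ω, g ω * μ[f | m] ω ∂μ = ∫ ω, g ω * f ω ∂μ := calc
  ∫ ω, g ω * μ[f | m] ω ∂μ = ∫ ω, μ[g * f | m] ω ∂μ :=
    integral_congr_ae (condExp_mul_of_stronglyMeasurable_left hg hgf hf).symm
  _ = ∫ ω, g ω * f ω ∂μ := integral_condExp hm

lemma integral_condExp_mul_condExp (hm : m ≤ m0) [IsFiniteMeasure μ] {f g : Ω → ℝ}
    (hf : MemLp f 2 μ) (hg : MemLp g 2 μ) :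
    ∫ ω, μ[f | m] ω * μ[g | m] ω ∂μ = ∫ ω, μ[f | m] ω * g ω ∂μ :=
  integral_mul_condExp_of_stronglyMeasurable hm stronglyMeasurable_condExp
    ((hf.condExp one_le_two).integrable_mul hg) (hg.integrable one_le_two)

lemma integral_condCov (hm : m ≤ m0) [IsFiniteMeasure μ] {f g : Ω → ℝ}
    (hf : MemLp f 2 μ) (hg : MemLp g 2 μ) :
    ∫ ω, condCov m f g μ ω ∂μ = ∫ ω, f ω * g ω ∂μ - ∫ ω, μ[f | m] ω * g ω ∂μ := by
  have hfg : Integrable (fun ω => μ[f | m] ω * μ[g | m] ω) μ :=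
    (hf.condExp one_le_two).integrable_mul (hg.condExp one_le_two)
  simp only [condCov, Pi.sub_apply, Pi.mul_apply]
  rw [integral_sub integrable_condExp hfg, integral_condExp hm]
  exact congrArg _ (integral_condExp_mul_condExp hm hf hg)

lemma integral_sub_sq_eq_condExp_sub_sq_add (hm : m ≤ m0) [IsFiniteMeasure μ] {f g : Ω → ℝ}
    (hf : MemLp f 2 μ) (hg : MemLp g 2 μ) :
    ∫ ω, (f ω - g ω) ^ 2 ∂μ = ∫ ω, (μ[f | m] ω - g ω) ^ 2 ∂μ
      + ∫ ω, (f ω - μ[f | m] ω) ^ 2 ∂μ - 2 * ∫ ω, condCov m f g μ ω ∂μ := by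
  set F := μ[f | m]
  have hF : MemLp F 2 μ := hf.condExp one_le_two
  have hFf : ∫ ω, F ω * f ω ∂μ = ∫ ω, F ω * F ω ∂μ :=
    (integral_condExp_mul_condExp hm hf hf).symm
  have iFf : Integrable (fun ω => F ω * f ω) μ := hF.integrable_mul hf
  have iFF : Integrable (fun ω => F ω * F ω) μ := hF.integrable_mul hF
  have iFg : Integrable (fun ω => F ω * g ω) μ := hF.integrable_mul hg
  have ifg : Integrable (fun ω => f ω * g ω) μ := hf.integrable_mul hg
  have i₁ : Integrable (fun ω => (F ω - g ω) ^ 2) μ := (hF.sub hg).integrable_sq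
  have i₂ : Integrable (fun ω => (f ω - F ω) ^ 2) μ := (hf.sub hF).integrable_sq
  have i₃ : Integrable (fun ω => 2 * (F ω * f ω - F ω * F ω)) μ := (iFf.sub iFF).const_mul 2
  have i₄ : Integrable (fun ω => 2 * (F ω * g ω - f ω * g ω)) μ := (iFg.sub ifg).const_mul 2
  have hsplit : ∀ ω, (f ω - g ω) ^ 2 = ((F ω - g ω) ^ 2 + (f ω - F ω) ^ 2)
      + (2 * (F ω * f ω - F ω * F ω) + 2 * (F ω * g ω - f ω * g ω)) := fun ω => by ring
  simp_rw [hsplit]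
  have i₁₂ : Integrable (fun ω => (F ω - g ω) ^ 2 + (f ω - F ω) ^ 2) μ := i₁.add i₂
  have i₃₄ : Integrable (fun ω => 2 * (F ω * f ω - F ω * F ω) + 2 * (F ω * g ω - f ω * g ω)) μ :=
    i₃.add i₄
  rw [integral_add i₁₂ i₃₄, integral_add i₁ i₂, integral_add i₃ i₄,
    integral_const_mul, integral_const_mul, integral_sub iFf iFF, integral_sub iFg ifg,
    integral_condCov hm hf hg, hFf]
  ring

end MeasureTheory

/-- If, conditional on `X`, the complex estimator
`Ŷ_{X,Z} = E[Y'|X,Z]` has nonpositive covariance with the true label `Y`,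
then the simple estimator `Ŷ_X = E[Y'|X]` weakly outperforms it in MSE on `Y`.
The σ-algebras `mX ⊆ mXZ` are those generated by `X` and by `(X, Z)`. -/
theorem simple_beats_complex_weak
    {Ω : Type*} {m0 : MeasurableSpace Ω} (μ : Measure Ω) [IsProbabilityMeasure μ]
    (mX mXZ : MeasurableSpace Ω) (h1 : mX ≤ mXZ) (h2 : mXZ ≤ m0)
    (Y Y' : Ω → ℝ) (hY : MemLp Y 2 μ) (hY' : MemLp Y' 2 μ)
    (hcov : ∀ᵐ ω ∂μ,
      (μ[fun ω' => (μ[Y'|mXZ]) ω' * Y ω' | mX]) ω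
        - (μ[(μ[Y'|mXZ]) | mX]) ω * (μ[Y|mX]) ω ≤ 0) :
    ∫ ω, ((μ[Y'|mX]) ω - Y ω) ^ 2 ∂μ ≤ ∫ ω, ((μ[Y'|mXZ]) ω - Y ω) ^ 2 ∂μ := by
  set Ŷ := μ[Y'|mXZ]
  have hdecomp := integral_sub_sq_eq_condExp_sub_sq_add (h1.trans h2) (hY'.condExp one_le_two : MemLp Ŷ 2 μ) hY
  have htower : ∫ ω, (μ[Ŷ|mX] ω - Y ω) ^ 2 ∂μ = ∫ ω, (μ[Y'|mX] ω - Y ω) ^ 2 ∂μ :=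
    integral_congr_ae <| by
      filter_upwards [condExp_condExp_of_le (f := Y') (μ := μ) h1 h2] with ω h using by rw [h]
  -- `hcov` is `condCov mX Ŷ Y μ ≤ 0` with the definition unfolded.
  have hcov_int : ∫ ω, condCov mX Ŷ Y μ ω ∂μ ≤ 0 := integral_nonpos_of_ae hcov
  have hvar : 0 ≤ ∫ ω, (Ŷ ω - μ[Ŷ|mX] ω) ^ 2 ∂μ := integral_nonneg fun ω => sq_nonneg _
  linarith
end

section
/- Let Y be square-integrable, X a random vector, Z a random variable, and Ŷ_{X,Z}, Ŷ_X as above (conditional expectations of a proxy Y'). If Cov(Ŷ_{X,Z}, Y | X) ≤ 0 almost surely, then E[Y · Ŷ_{X,Z}] ≤ E[Y · Ŷ_X]. -/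
open MeasureTheory ProbabilityTheory

lemma aux_integrable_mul {Ω : Type*} {m0 : MeasurableSpace Ω} {μ : Measure Ω}
    {f g : Ω → ℝ} (hf : MemLp f 2 μ) (hg : MemLp g 2 μ) :
    Integrable (fun ω => f ω * g ω) μ := by
  have hb : Integrable (fun ω => (f ω ^ 2 + g ω ^ 2) / 2) μ :=
    ((hf.integrable_sq.add hg.integrable_sq).div_const 2)
  refine hb.mono' (hf.1.mul hg.1) ?_
  filter_upwards with ω
  have h := sq_nonneg (|f ω| - |g ω|)
  rw [Real.norm_eq_abs, abs_mul]
  nlinarith [sq_abs (f ω), sq_abs (g ω)]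

lemma aux_memℒp_two_condexp {Ω : Type*} {m0 : MeasurableSpace Ω} {μ : Measure Ω}
    [IsProbabilityMeasure μ] {m : MeasurableSpace Ω} (hm : m ≤ m0)
    {f : Ω → ℝ} (hf : MemLp f 2 μ) :
    MemLp (μ[f|m]) 2 μ := by
  set F : Ω →₂[μ] ℝ := hf.toLp f with hF
  have hfF : f =ᵐ[μ] F := (hf.coeFn_toLp).symm
  set G : Ω →₂[μ] ℝ := ↑(condExpL2 ℝ ℝ hm F) with hG
  have h_eq : (G : Ω → ℝ) =ᵐ[μ] μ[f|m] := by
    refine ae_eq_condExp_of_forall_setIntegral_eq hm (hf.integrable one_le_two) ?_ ?_ ?_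
    · intro s _ hμs
      exact integrableOn_condExpL2_of_measure_ne_top hm hμs.ne F
    · intro s hs hμs
      have h2 := integral_condExpL2_eq (𝕜 := ℝ) hm F hs hμs.ne
      exact h2.trans (integral_congr_ae (ae_restrict_of_ae hfF.symm))
    · exact aestronglyMeasurable_condExpL2 hm F
  exact (Lp.memLp G).ae_eq h_eq

/-- If `Cov(Ŷ_{X,Z}, Y | X) ≤ 0` almost surely, then
`E[Y · Ŷ_{X,Z}] ≤ E[Y · Ŷ_X]`. -/
theorem cross_term_inequality
    {Ω : Type*} {m0 : MeasurableSpace Ω} (μ : Measure Ω) [IsProbabilityMeasure μ]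
    (mX mXZ : MeasurableSpace Ω) (h1 : mX ≤ mXZ) (h2 : mXZ ≤ m0)
    (Y Y' : Ω → ℝ) (hY : MemLp Y 2 μ) (hY' : MemLp Y' 2 μ)
    (hcov : ∀ᵐ ω ∂μ,
      (μ[fun ω' => (μ[Y'|mXZ]) ω' * Y ω' | mX]) ω
        - (μ[(μ[Y'|mXZ]) | mX]) ω * (μ[Y|mX]) ω ≤ 0) :
    ∫ ω, Y ω * (μ[Y'|mXZ]) ω ∂μ ≤ ∫ ω, Y ω * (μ[Y'|mX]) ω ∂μ := by
  have hmX : mX ≤ m0 := h1.trans h2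
  set g : Ω → ℝ := μ[Y'|mXZ] with hg
  set h : Ω → ℝ := μ[Y'|mX] with hh
  have hgL2 : MemLp g 2 μ := aux_memℒp_two_condexp h2 hY'
  have hhL2 : MemLp h 2 μ := aux_memℒp_two_condexp hmX hY'
  -- integrability of products
  have hgY : Integrable (fun ω => g ω * Y ω) μ := aux_integrable_mul hgL2 hY
  have hhY : Integrable (fun ω => h ω * Y ω) μ := aux_integrable_mul hhL2 hY
  -- tower: μ[g|mX] =ᵐ h
  have htower : μ[g|mX] =ᵐ[μ] h := condExp_condExp_of_le h1 h2
  -- pull-out: μ[h * Y|mX] =ᵐ h * μ[Y|mX]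
  have hpull : μ[(fun ω => h ω * Y ω)|mX] =ᵐ[μ] fun ω => h ω * (μ[Y|mX]) ω := by
    exact condExp_mul_of_stronglyMeasurable_left (m := mX) (μ := μ)
      (f := h) (g := Y) stronglyMeasurable_condExp hhY (hY.integrable one_le_two)
  -- Step 1: ∫ Y*g = ∫ μ[g*Y|mX]
  have e1 : ∫ ω, Y ω * g ω ∂μ = ∫ ω, (μ[fun ω' => g ω' * Y ω' | mX]) ω ∂μ := by
    rw [integral_condExp (f := fun ω' => g ω' * Y ω') hmX]
    simp_rw [mul_comm]
  -- Step 2: ∫ μ[g*Y|mX] ≤ ∫ μ[g|mX] * μ[Y|mX]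
  have hint1 : Integrable (μ[fun ω' => g ω' * Y ω' | mX]) μ := integrable_condExp
  have hint2 : Integrable (fun ω => (μ[g|mX]) ω * (μ[Y|mX]) ω) μ := by
    refine (integrable_condExp.congr hpull).congr ?_
    filter_upwards [htower] with ω hω
    rw [hω]
  have e2 : ∫ ω, (μ[fun ω' => g ω' * Y ω' | mX]) ω ∂μ
      ≤ ∫ ω, (μ[g|mX]) ω * (μ[Y|mX]) ω ∂μ := by
    refine integral_mono_ae hint1 hint2 ?_
    filter_upwards [hcov] with ω hω
    linarith
  -- Step 3: ∫ μ[g|mX]*μ[Y|mX] = ∫ h*μ[Y|mX] = ∫ μ[h*Y|mX] = ∫ h*Y = ∫ Y*h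
  have e3 : ∫ ω, (μ[g|mX]) ω * (μ[Y|mX]) ω ∂μ = ∫ ω, Y ω * h ω ∂μ := by
    have step1 : ∫ ω, (μ[g|mX]) ω * (μ[Y|mX]) ω ∂μ
        = ∫ ω, h ω * (μ[Y|mX]) ω ∂μ := by
      refine integral_congr_ae ?_
      filter_upwards [htower] with ω hω
      rw [hω]
    have step2 : ∫ ω, h ω * (μ[Y|mX]) ω ∂μ
        = ∫ ω, (μ[(fun ω' => h ω' * Y ω')|mX]) ω ∂μ :=
      (integral_congr_ae hpull).symm
    rw [step1, step2, integral_condExp (f := fun ω' => h ω' * Y ω') hmX]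
    simp_rw [mul_comm]
  calc ∫ ω, Y ω * g ω ∂μ = _ := e1
    _ ≤ _ := e2
    _ = ∫ ω, Y ω * h ω ∂μ := e3
end

section
/- Suppose Ŷ_{X,Z} = E[Y' | X, Z] = f(X) + g(X)·Z for measurable f, g, and suppose that almost surely Cov(Y, Z | X) and Cov(Y', Z | X) have opposite signs (i.e., their product is ≤ 0). Then Cov(Ŷ_{X,Z}, Y | X) ≤ 0 almost surely, and consequently E[(Ŷ_X − Y)²] ≤ E[(Ŷ_{X,Z} − Y)²], where Ŷ_X = E[Y' | X]. -/
/-!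
Write `C = Cov(Y, Z | X)`, `C' = Cov(Y', Z | X)` and `V = Var(Z | X)`. Since `F` and `G` are
`X`-measurable, `Cov(Ŷ_{X,Z}, Y | X) = G C` and, by the tower property, `G C' = G² V`. The sign
condition `C C' ≤ 0` then forces `G C ≤ 0` where `V > 0`, while where `V = 0` the conditional
Cauchy–Schwarz inequality gives `C = 0`. For the second claim, `Ŷ_X = E[Ŷ_{X,Z} | X]` and
`E[(Ŷ_{X,Z} - Y)²] = E[(Ŷ_X - Y)²] + E[(Ŷ_{X,Z} - Ŷ_X)²] - 2 E[Cov(Ŷ_{X,Z}, Y | X)]`.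
-/

open MeasureTheory ProbabilityTheory

lemma mul_nonpos_of_mul_nonpos_of_mul_eq_sq_mul {a c c' g v : ℝ} (hsign : c * c' ≤ 0)
    (hc' : g * c' = g ^ 2 * v) (hv : 0 ≤ v) (hcs : c ^ 2 ≤ a * v) : g * c ≤ 0 := by
  rcases hv.eq_or_lt with rfl | hv
  · have hc : c = 0 := by nlinarith [sq_nonneg c]
    simp [hc]
  rcases eq_or_ne g 0 with rfl | hg
  · simp
  have key : g * c * (g ^ 2 * v) ≤ 0 := by
    rw [← hc', show g * c * (g * c') = g ^ 2 * (c * c') by ring]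
    exact mul_nonpos_of_nonneg_of_nonpos (sq_nonneg g) hsign
  exact nonpos_of_mul_nonpos_left key (by positivity)

namespace ProbabilityTheory

variable {Ω : Type*} {m m' m0 : MeasurableSpace Ω} {μ : Measure[m0] Ω} {X Y W F G : Ω → ℝ}

noncomputable def condCov (m : MeasurableSpace Ω) (μ : Measure[m0] Ω) (X Y : Ω → ℝ) :
    Ω → ℝ :=
  μ[X * Y | m] - μ[X | m] * μ[Y | m]

lemma condCov_comm (X Y : Ω → ℝ) : condCov m μ X Y = condCov m μ Y X := by
  simp only [condCov, mul_comm]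

lemma condCov_congr_ae_left (h : X =ᵐ[μ] W) : condCov m μ X Y =ᵐ[μ] condCov m μ W Y := by
  filter_upwards [condExp_congr_ae (m := m) h,
    condExp_congr_ae (m := m) (h.mul (Filter.EventuallyEq.refl _ Y))] with ω hX hXY
  simp only [condCov, Pi.sub_apply, Pi.mul_apply, hX, hXY]

lemma condCov_mul_left_of_stronglyMeasurable (hG : StronglyMeasurable[m] G)
    (hGXY : Integrable (G * X * Y) μ) (hGX : Integrable (G * X) μ) (hXY : Integrable (X * Y) μ)
    (hX : Integrable X μ) :
    condCov m μ (G * X) Y =ᵐ[μ] G * condCov m μ X Y := by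
  rw [mul_assoc] at hGXY
  filter_upwards [condExp_mul_of_stronglyMeasurable_left hG hGXY hXY,
    condExp_mul_of_stronglyMeasurable_left hG hGX hX] with ω hGXY hGX
  simp only [condCov, mul_assoc, Pi.sub_apply, Pi.mul_apply] at hGXY hGX ⊢
  rw [hGXY, hGX]
  ring

lemma condCov_add_left_of_stronglyMeasurable [IsFiniteMeasure μ] (hm : m ≤ m0)
    (hF : StronglyMeasurable[m] F) (hFi : Integrable F μ) (hFY : Integrable (F * Y) μ)
    (hX : Integrable X μ) (hXY : Integrable (X * Y) μ) (hY : Integrable Y μ) :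
    condCov m μ (F + X) Y =ᵐ[μ] condCov m μ X Y := by
  filter_upwards [condExp_add (m := m) hFY hXY, condExp_add (m := m) hFi hX,
    condExp_mul_of_stronglyMeasurable_left hF hFY hY] with ω hsumY hsum hFY
  simp only [condCov, add_mul, Pi.sub_apply, Pi.add_apply, Pi.mul_apply] at hsumY hsum hFY ⊢
  rw [hsumY, hsum, hFY, condExp_of_stronglyMeasurable hm hF hFi]
  ring

lemma condCov_add_mul_left_of_stronglyMeasurable [IsFiniteMeasure μ] (hm : m ≤ m0)
    (hF : StronglyMeasurable[m] F) (hG : StronglyMeasurable[m] G) (hFi : Integrable F μ)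
    (hFY : Integrable (F * Y) μ) (hGX : Integrable (G * X) μ) (hGXY : Integrable (G * X * Y) μ)
    (hX : Integrable X μ) (hXY : Integrable (X * Y) μ) (hY : Integrable Y μ) :
    condCov m μ (F + G * X) Y =ᵐ[μ] G * condCov m μ X Y :=
  (condCov_add_left_of_stronglyMeasurable hm hF hFi hFY hGX hGXY hY).trans
    (condCov_mul_left_of_stronglyMeasurable hG hGXY hGX hXY hX)

lemma condCov_condExp_left [IsFiniteMeasure μ] (hm : m ≤ m') (hm' : m' ≤ m0)
    (hY : AEStronglyMeasurable[m'] Y μ) (hXY : Integrable (X * Y) μ) (hX : Integrable X μ) :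
    condCov m μ (μ[X | m']) Y =ᵐ[μ] condCov m μ X Y := by
  have hpull : μ[μ[X | m'] * Y | m] =ᵐ[μ] μ[X * Y | m] :=
    (condExp_congr_ae (condExp_mul_of_aestronglyMeasurable_right hY hXY hX).symm).trans
      (condExp_condExp_of_le hm hm')
  filter_upwards [hpull, condExp_condExp_of_le (f := X) (μ := μ) hm hm'] with ω hXY hX
  simp only [condCov, Pi.sub_apply, Pi.mul_apply, hXY, hX]

lemma condCov_self_ae_eq_condVar [IsFiniteMeasure μ] (hm : m ≤ m0) (hX : MemLp X 2 μ) :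
    condCov m μ X X =ᵐ[μ] Var[X; μ | m] := by
  filter_upwards [condVar_ae_eq_condExp_sq_sub_sq_condExp hm hX] with ω hω
  simp only [condCov, hω, Pi.sub_apply, Pi.mul_apply, sq]

lemma condVar_nonneg : 0 ≤ᵐ[μ] Var[X; μ | m] :=
  condExp_nonneg (ae_of_all _ fun _ => sq_nonneg _)

lemma condVar_add_smul [IsFiniteMeasure μ] (hm : m ≤ m0) (hX : MemLp X 2 μ) (hY : MemLp Y 2 μ)
    (c : ℝ) :
    Var[X + c • Y; μ | m] =ᵐ[μ]
      Var[X; μ | m] + (2 * c) • condCov m μ X Y + c ^ 2 • Var[Y; μ | m] := by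
  have hX2 : Integrable (X ^ 2) μ := hX.integrable_sq
  have hXY : Integrable ((2 * c) • (X * Y)) μ := (hX.integrable_mul hY).smul _
  have hY2 : Integrable (c ^ 2 • Y ^ 2) μ := hY.integrable_sq.smul _
  have hsq : (X + c • Y) ^ 2 = X ^ 2 + (2 * c) • (X * Y) + c ^ 2 • Y ^ 2 := by
    ext ω; simp only [Pi.add_apply, Pi.pow_apply, Pi.smul_apply, Pi.mul_apply, smul_eq_mul]; ring
  filter_upwards [condVar_ae_eq_condExp_sq_sub_sq_condExp hm (hX.add (hY.const_smul c)),
    condVar_ae_eq_condExp_sq_sub_sq_condExp hm hX, condVar_ae_eq_condExp_sq_sub_sq_condExp hm hY,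
    condExp_add (m := m) (hX2.add hXY) hY2, condExp_add (m := m) hX2 hXY,
    condExp_smul (m := m) (μ := μ) (2 * c) (X * Y),
    condExp_smul (m := m) (μ := μ) (c ^ 2) (Y ^ 2),
    condExp_add (m := m) (hX.integrable one_le_two) ((hY.integrable one_le_two).smul c),
    condExp_smul (m := m) (μ := μ) c Y] with ω hV hVX hVY h1 h2 h3 h4 h5 h6
  simp only [hsq, condCov, Pi.add_apply, Pi.sub_apply, Pi.pow_apply, Pi.smul_apply,
    Pi.mul_apply, smul_eq_mul] at hV hVX hVY h1 h2 h3 h4 h5 h6 ⊢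
  rw [hV, hVX, hVY, h1, h2, h3, h4, h5, h6]
  ring

lemma condCov_sq_le_condVar_mul_condVar [IsFiniteMeasure μ] (hm : m ≤ m0) (hX : MemLp X 2 μ)
    (hY : MemLp Y 2 μ) :
    ∀ᵐ ω ∂μ, condCov m μ X Y ω ^ 2 ≤ Var[X; μ | m] ω * Var[Y; μ | m] ω := by
  have hquad : ∀ q : ℚ, ∀ᵐ ω ∂μ,
      0 ≤ Var[Y; μ | m] ω * (q * q) + 2 * condCov m μ X Y ω * q + Var[X; μ | m] ω := by
    intro q
    filter_upwards [condVar_add_smul hm hX hY q, condVar_nonneg (m := m) (X := X + (q : ℝ) • Y)]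
      with ω hω hnonneg
    simp only [hω, Pi.add_apply, Pi.smul_apply, Pi.zero_apply, smul_eq_mul] at hnonneg
    linarith
  filter_upwards [ae_all_iff.2 hquad] with ω hω
  have hreal : ∀ t : ℝ,
      0 ≤ Var[Y; μ | m] ω * (t * t) + 2 * condCov m μ X Y ω * t + Var[X; μ | m] ω :=
    isClosed_property Rat.denseRange_cast (isClosed_le continuous_const (by fun_prop)) hω
  have := discrim_le_zero hreal
  rw [discrim] at this
  linarith

lemma mul_condCov_ae_eq_mul_mul_condVar [IsFiniteMeasure μ] {Z H : Ω → ℝ} (hm : m ≤ m')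
    (hm' : m' ≤ m0) (hX : MemLp X 2 μ) (hZ : MemLp Z 2 μ) (hF : StronglyMeasurable[m] F)
    (hG : StronglyMeasurable[m] G) (hFi : Integrable F μ) (hFZ : Integrable (F * Z) μ)
    (hGZ : Integrable (G * Z) μ) (hGZ2 : Integrable (G * Z ^ 2) μ)
    (hform : μ[X | m'] =ᵐ[μ] F + G * Z) (hH : StronglyMeasurable[m] H)
    (hHle : ∀ ω, ‖H ω‖ ≤ 1) (hHZ : AEStronglyMeasurable[m'] (H * Z) μ) :
    H * condCov m μ X Z =ᵐ[μ] G * H * Var[Z; μ | m] := by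
  have hHtop : MemLp H ⊤ μ :=
    memLp_top_of_bound (hH.mono (hm.trans hm')).aestronglyMeasurable 1 (ae_of_all _ hHle)
  have hHZ2 : MemLp (H * Z) 2 μ :=
    hZ.of_le (hHZ.mono hm') (ae_of_all _ fun ω => by
      rw [Pi.mul_apply, norm_mul]; exact mul_le_of_le_one_left (norm_nonneg _) (hHle ω))
  have hZi := hZ.integrable one_le_two
  have hHZi := hHZ2.integrable one_le_two
  have hcovH : condCov m μ X (H * Z) =ᵐ[μ] H * condCov m μ X Z := by
    rw [condCov_comm X, condCov_comm X]
    exact condCov_mul_left_of_stronglyMeasurable hH (hHZ2.integrable_mul hX) hHZi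
      (hZ.integrable_mul hX) hZi
  have hcovY : condCov m μ (μ[X | m']) (H * Z) =ᵐ[μ] condCov m μ X (H * Z) :=
    condCov_condExp_left hm hm' hHZ (hX.integrable_mul hHZ2) (hX.integrable one_le_two)
  have hcovForm : condCov m μ (μ[X | m']) (H * Z) =ᵐ[μ] G * condCov m μ Z (H * Z) := by
    refine (condCov_congr_ae_left hform).trans
      (condCov_add_mul_left_of_stronglyMeasurable (hm.trans hm') hF hG hFi ?_ hGZ ?_ hZi
        (hZ.integrable_mul hHZ2) hHZi)
    · rw [show F * (H * Z) = H * (F * Z) by ring]; exact hFZ.mul_of_top_right hHtop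
    · rw [show G * Z * (H * Z) = H * (G * Z ^ 2) by ring]; exact hGZ2.mul_of_top_right hHtop
  have hcovZ : condCov m μ Z (H * Z) =ᵐ[μ] H * condCov m μ Z Z := by
    rw [condCov_comm Z (H * Z)]
    exact condCov_mul_left_of_stronglyMeasurable hH (hHZ2.integrable_mul hZ) hHZi
      (hZ.integrable_mul hZ) hZi
  filter_upwards [hcovH, hcovY, hcovForm, hcovZ, condCov_self_ae_eq_condVar (hm.trans hm') hZ]
    with ω h1 h2 h3 h4 h5
  simp only [Pi.mul_apply] at h1 h2 h3 h4 ⊢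
  rw [← h5]
  linear_combination -h1 - h2 + h3 + G ω * h4

lemma mul_condCov_ae_eq_sq_mul_condVar [IsFiniteMeasure μ] {Z : Ω → ℝ} (hm : m ≤ m')
    (hm' : m' ≤ m0) (hX : MemLp X 2 μ) (hZ : MemLp Z 2 μ) (hF : StronglyMeasurable[m] F)
    (hG : StronglyMeasurable[m] G) (hFi : Integrable F μ) (hFZ : Integrable (F * Z) μ)
    (hGZ : Integrable (G * Z) μ) (hGZ2 : Integrable (G * Z ^ 2) μ)
    (hform : μ[X | m'] =ᵐ[μ] F + G * Z) :
    G * condCov m μ X Z =ᵐ[μ] G ^ 2 * Var[Z; μ | m] := by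
  -- `Z` itself need not be `m'`-measurable, but `w * G * Z = w * (μ[X | m'] - F)` a.e. is, and
  -- the weight `w` makes `w * G` bounded.
  set w : Ω → ℝ := fun ω => (1 + |G ω|)⁻¹
  have hw_pos : ∀ ω, 0 < w ω := fun ω => by positivity
  have hw : StronglyMeasurable[m] w :=
    (by fun_prop (disch := intro x; positivity) : Continuous fun x : ℝ => (1 + |x|)⁻¹)
      |>.comp_stronglyMeasurable hG
  have hwG_le : ∀ ω, ‖(w * G) ω‖ ≤ 1 := fun ω => by
    rw [Pi.mul_apply, norm_mul, Real.norm_eq_abs, Real.norm_eq_abs, abs_of_pos (hw_pos ω),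
      inv_mul_le_one₀ (by positivity)]
    linarith
  have hwGZ : AEStronglyMeasurable[m'] (w * G * Z) μ := by
    refine ⟨w * (μ[X | m'] - F), (hw.mono hm).mul (stronglyMeasurable_condExp.sub (hF.mono hm)),
      ?_⟩
    filter_upwards [hform] with ω hω
    simp only [Pi.mul_apply, Pi.sub_apply, hω, Pi.add_apply]
    ring
  filter_upwards [mul_condCov_ae_eq_mul_mul_condVar hm hm' hX hZ hF hG hFi hFZ hGZ hGZ2 hform
    (hw.mul hG) hwG_le hwGZ] with ω hω
  simp only [Pi.mul_apply, Pi.pow_apply] at hω ⊢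
  apply mul_left_cancel₀ (hw_pos ω).ne'
  linear_combination hω

lemma integral_mul_condExp_of_stronglyMeasurable [IsFiniteMeasure μ] (hm : m ≤ m0)
    (hF : StronglyMeasurable[m] F) (hFX : Integrable (F * X) μ) (hX : Integrable X μ) :
    ∫ ω, F ω * μ[X | m] ω ∂μ = ∫ ω, F ω * X ω ∂μ :=
  (integral_congr_ae (condExp_mul_of_stronglyMeasurable_left hF hFX hX)).symm.trans
    (integral_condExp hm)

lemma integral_condCov [IsFiniteMeasure μ] (hm : m ≤ m0) (hX : MemLp X 2 μ)
    (hY : MemLp Y 2 μ) :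
    ∫ ω, condCov m μ X Y ω ∂μ = ∫ ω, (X ω - μ[X | m] ω) * Y ω ∂μ := by
  have hXm := hX.condExp (m := m) one_le_two
  simp only [condCov, Pi.sub_apply, Pi.mul_apply, sub_mul]
  have hXmYm : Integrable (fun ω => μ[X | m] ω * μ[Y | m] ω) μ :=
    hXm.integrable_mul (hY.condExp one_le_two)
  have hXY : Integrable (fun ω => X ω * Y ω) μ := hX.integrable_mul hY
  have hXmY : Integrable (fun ω => μ[X | m] ω * Y ω) μ := hXm.integrable_mul hY
  rw [integral_sub integrable_condExp hXmYm, integral_sub hXY hXmY, integral_condExp hm,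
    integral_mul_condExp_of_stronglyMeasurable hm stronglyMeasurable_condExp
      (hXm.integrable_mul hY) (hY.integrable one_le_two)]
  rfl

lemma integral_sub_sq_eq [IsFiniteMeasure μ] (hm : m ≤ m0) (hW : MemLp W 2 μ)
    (hY : MemLp Y 2 μ) :
    ∫ ω, (W ω - Y ω) ^ 2 ∂μ =
      ∫ ω, (μ[W | m] ω - Y ω) ^ 2 ∂μ + ∫ ω, (W ω - μ[W | m] ω) ^ 2 ∂μ
        - 2 * ∫ ω, condCov m μ W Y ω ∂μ := by
  have hWm := hW.condExp (m := m) one_le_two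
  have hD := hW.sub hWm
  have horth : ∫ ω, (W ω - μ[W | m] ω) * μ[W | m] ω ∂μ = 0 := by
    have hself := integral_mul_condExp_of_stronglyMeasurable hm stronglyMeasurable_condExp
      (hWm.integrable_mul hW) (hW.integrable one_le_two)
    simp only [sub_mul]
    have hWWm : Integrable (fun ω => W ω * μ[W | m] ω) μ := hW.integrable_mul hWm
    have hWmWm : Integrable (fun ω => μ[W | m] ω * μ[W | m] ω) μ := hWm.integrable_mul hWm
    rw [integral_sub hWWm hWmWm, hself]
    simp only [mul_comm (W _), sub_self]
  calc ∫ ω, (W ω - Y ω) ^ 2 ∂μ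
      = ∫ ω, ((μ[W | m] ω - Y ω) ^ 2 + (W ω - μ[W | m] ω) ^ 2
          + 2 * ((W ω - μ[W | m] ω) * μ[W | m] ω)
          - 2 * ((W ω - μ[W | m] ω) * Y ω)) ∂μ :=
        integral_congr_ae (ae_of_all _ fun ω => by ring)
    _ = _ := by
      have h1 : Integrable (fun ω => (μ[W | m] ω - Y ω) ^ 2) μ := (hWm.sub hY).integrable_sq
      have h2 : Integrable (fun ω => (W ω - μ[W | m] ω) ^ 2) μ := hD.integrable_sq
      have h3 : Integrable (fun ω => 2 * ((W ω - μ[W | m] ω) * μ[W | m] ω)) μ :=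
        (hD.integrable_mul hWm).const_mul 2
      have h4 : Integrable (fun ω => 2 * ((W ω - μ[W | m] ω) * Y ω)) μ :=
        (hD.integrable_mul hY).const_mul 2
      have h12 : Integrable (fun ω => (μ[W | m] ω - Y ω) ^ 2 + (W ω - μ[W | m] ω) ^ 2) μ :=
        h1.add h2
      have h123 : Integrable (fun ω => (μ[W | m] ω - Y ω) ^ 2 + (W ω - μ[W | m] ω) ^ 2
          + 2 * ((W ω - μ[W | m] ω) * μ[W | m] ω)) μ := h12.add h3
      rw [integral_sub h123 h4, integral_add h12 h3, integral_add h1 h2,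
        integral_const_mul, integral_const_mul, horth, integral_condCov hm hW hY]
      ring

lemma integral_sq_condExp_sub_le [IsFiniteMeasure μ] (hm : m ≤ m0) (hW : MemLp W 2 μ)
    (hY : MemLp Y 2 μ) (hcov : condCov m μ W Y ≤ᵐ[μ] 0) :
    ∫ ω, (μ[W | m] ω - Y ω) ^ 2 ∂μ ≤ ∫ ω, (W ω - Y ω) ^ 2 ∂μ := by
  rw [integral_sub_sq_eq hm hW hY]
  have hcov_int := integral_nonpos_of_ae hcov
  have hsq_int : 0 ≤ ∫ ω, (W ω - μ[W | m] ω) ^ 2 ∂μ :=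
    integral_nonneg fun ω => sq_nonneg _
  linarith

end ProbabilityTheory

/-- Suppose the complex estimator `Ŷ_{X,Z} = E[Y'|X,Z]` has
the linear-in-`Z` form `f(X) + g(X)·Z`, and that almost surely the conditional
covariances `Cov(Y, Z | X)` and `Cov(Y', Z | X)` have opposite signs (their
product is `≤ 0`). Then `Cov(Ŷ_{X,Z}, Y | X) ≤ 0` almost surely, and
consequently `E[(Ŷ_X − Y)²] ≤ E[(Ŷ_{X,Z} − Y)²]`, where `Ŷ_X = E[Y'|X]`. -/
theorem opposite_signs_implies_simple_better
    {Ω : Type*} {m0 : MeasurableSpace Ω} (μ : Measure Ω) [IsProbabilityMeasure μ]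
    (mX mXZ : MeasurableSpace Ω) (h1 : mX ≤ mXZ) (h2 : mXZ ≤ m0)
    (Y Y' Z F G : Ω → ℝ) (hY : MemLp Y 2 μ) (hY' : MemLp Y' 2 μ)
    (hZ : MemLp Z 2 μ)
    (hF : StronglyMeasurable[mX] F) (hG : StronglyMeasurable[mX] G)
    (hFint : Integrable F μ)
    (hFZint : Integrable (fun ω => F ω * Z ω) μ)
    (hGZint : Integrable (fun ω => G ω * Z ω) μ)
    (hGZ2int : Integrable (fun ω => G ω * Z ω ^ 2) μ)
    (hFYint : Integrable (fun ω => F ω * Y ω) μ)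
    (hGZYint : Integrable (fun ω => G ω * Z ω * Y ω) μ)
    (hform : μ[Y'|mXZ] =ᵐ[μ] fun ω => F ω + G ω * Z ω)
    (hsign : ∀ᵐ ω ∂μ,
      ((μ[fun ω' => Y ω' * Z ω' | mX]) ω - (μ[Y|mX]) ω * (μ[Z|mX]) ω)
        * ((μ[fun ω' => Y' ω' * Z ω' | mX]) ω - (μ[Y'|mX]) ω * (μ[Z|mX]) ω) ≤ 0) :
    (∀ᵐ ω ∂μ,
      (μ[fun ω' => (μ[Y'|mXZ]) ω' * Y ω' | mX]) ω
        - (μ[(μ[Y'|mXZ]) | mX]) ω * (μ[Y|mX]) ω ≤ 0) ∧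
    ∫ ω, ((μ[Y'|mX]) ω - Y ω) ^ 2 ∂μ ≤ ∫ ω, ((μ[Y'|mXZ]) ω - Y ω) ^ 2 ∂μ := by
  have hmX : mX ≤ m0 := h1.trans h2
  have hcov : condCov mX μ (μ[Y'|mXZ]) Y =ᵐ[μ] G * condCov mX μ Y Z := by
    rw [condCov_comm Y]
    exact (condCov_congr_ae_left hform).trans
      (condCov_add_mul_left_of_stronglyMeasurable hmX hF hG hFint hFYint hGZint hGZYint
        (hZ.integrable one_le_two) (hZ.integrable_mul hY) (hY.integrable one_le_two))
  have hsimple : condCov mX μ (μ[Y'|mXZ]) Y ≤ᵐ[μ] 0 := by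
    filter_upwards [hcov, hsign,
      mul_condCov_ae_eq_sq_mul_condVar h1 h2 hY' hZ hF hG hFint hFZint hGZint hGZ2int hform,
      condVar_nonneg, condCov_sq_le_condVar_mul_condVar hmX hY hZ] with ω hω hs hG' hV hcs
    rw [hω]
    exact mul_nonpos_of_mul_nonpos_of_mul_eq_sq_mul hs hG' hV hcs
  refine ⟨hsimple, ?_⟩
  have htower : μ[μ[Y'|mXZ]|mX] =ᵐ[μ] μ[Y'|mX] := condExp_condExp_of_le h1 h2
  calc ∫ ω, ((μ[Y'|mX]) ω - Y ω) ^ 2 ∂μ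
        = ∫ ω, ((μ[μ[Y'|mXZ]|mX]) ω - Y ω) ^ 2 ∂μ :=
        integral_congr_ae (by filter_upwards [htower] with ω hω; rw [hω])
    _ ≤ _ := integral_sq_condExp_sub_le hmX (hY'.condExp one_le_two) hY hsimple
end

section
/- In the linear SEM above, the partial covariance of future arrests A₁ and neighborhood Z given past arrests A₀, defined as σ_{A₁Z} − σ_{A₁A₀}·σ_{A₀Z}, equals (α + βγ)(1 − α² − 2αβγ − γ²(β² + δ)), and is nonnegative; in fact it is at least (α + βγ)·σ_A² ≥ 0. -/
/-- The partial covariance of `A₁` and `Z` given `A₀`, namely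
`σ_{A₁Z} − σ_{A₁A₀}·σ_{A₀Z}`, equals `(α + βγ)(1 − α² − 2αβγ − γ²(β² + δ))`,
is at least `(α + βγ)·σ_A²`, and is nonnegative. -/
theorem partial_cov_A1_Z_given_A0_nonneg
    (α β γ δ : ℝ) (hα : 0 ≤ α) (hβ : 0 ≤ β) (hγ : 0 ≤ γ) (hδ : 0 ≤ δ)
    (hβδ : β ^ 2 + δ ≤ 1)
    (hσA : 0 ≤ 1 - α ^ 2 - γ ^ 2 - 2 * α * β * γ) :
    (α + β * γ) - (α ^ 2 + 2 * α * β * γ + β ^ 2 * γ ^ 2 + γ ^ 2 * δ) * (α + β * γ)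
        = (α + β * γ) * (1 - α ^ 2 - 2 * α * β * γ - γ ^ 2 * (β ^ 2 + δ)) ∧
    (α + β * γ) * (1 - α ^ 2 - γ ^ 2 - 2 * α * β * γ)
        ≤ (α + β * γ) - (α ^ 2 + 2 * α * β * γ + β ^ 2 * γ ^ 2 + γ ^ 2 * δ) * (α + β * γ) ∧
    0 ≤ (α + β * γ) - (α ^ 2 + 2 * α * β * γ + β ^ 2 * γ ^ 2 + γ ^ 2 * δ) * (α + β * γ) := by
  have h1 : 0 ≤ α + β * γ := by positivity
  have h2 : (α + β * γ) * (1 - α ^ 2 - γ ^ 2 - 2 * α * β * γ)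
      ≤ (α + β * γ) - (α ^ 2 + 2 * α * β * γ + β ^ 2 * γ ^ 2 + γ ^ 2 * δ) * (α + β * γ) := by
    nlinarith [mul_nonneg h1 hσA, mul_nonneg (mul_nonneg h1 (sq_nonneg γ)) (sub_nonneg.2 hβδ)]
  exact ⟨by ring, h2, le_trans (mul_nonneg h1 hσA) h2⟩
end
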